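/- arXiv:1606.06929 — 2 statements merged into one kernel-verified Lean document; each statement's English description precedes it below -/
import Mathlib

section
/- Let m be a positive integer and C, D sets of nonnegative integers with C ∪ D = [0, m], C ∩ D = {r₁, ..., r_s} where 0 < r₁ < ... < r_s ≤ m, and R_C(n) = R_D(n) for every positive integer n. Then the reflected sets C' = m − C = {m − c : c ∈ C} and D' = m − D = {m − d : d ∈ D} satisfy C' ∪ D' = [0, m], C' ∩ D' = {m − r_s, ..., m − r₁}, and R_{C'}(n) = R_{D'}(n) for every positive integer n. -/
/-- `R S n` is the number of unordered representations of `n` as `s + s'`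
with `s, s' ∈ S` and `s < s'`. -/
noncomputable def R (S : Set ℕ) (n : ℕ) : ℕ :=
  {p : ℕ × ℕ | p.1 ∈ S ∧ p.2 ∈ S ∧ p.1 < p.2 ∧ p.1 + p.2 = n}.ncard

/-- The Thue–Morse set: nonnegative integers with an even number of
`1` digits in binary. -/
def A : Set ℕ := {n | Even ((Nat.digits 2 n).sum)}

/-- The complement of the Thue–Morse set. -/
def B : Set ℕ := Aᶜ

lemma R_zero (S : Set ℕ) : R S 0 = 0 := by
  unfold R
  convert Set.ncard_empty (ℕ × ℕ)
  ext ⟨p, q⟩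
  simp only [Set.mem_setOf_eq, Set.mem_empty_iff_false, iff_false]
  rintro ⟨-, -, h, h'⟩
  omega

lemma R_reflect (m : ℕ) (S : Set ℕ) (hS : S ⊆ Set.Iic m) (n : ℕ) :
    R ((m - ·) '' S) n = R S (2 * m - n) := by
  unfold R
  have himg : {p : ℕ × ℕ | p.1 ∈ (m - ·) '' S ∧ p.2 ∈ (m - ·) '' S ∧ p.1 < p.2 ∧ p.1 + p.2 = n}
      = (fun p : ℕ × ℕ => (m - p.2, m - p.1)) ''
        {p : ℕ × ℕ | p.1 ∈ S ∧ p.2 ∈ S ∧ p.1 < p.2 ∧ p.1 + p.2 = 2 * m - n} := by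
    ext ⟨x, y⟩
    simp only [Set.mem_setOf_eq, Set.mem_image, Prod.exists, Prod.mk.injEq]
    constructor
    · rintro ⟨⟨c, hc, hcx⟩, ⟨d, hd, hdy⟩, hxy, hsum⟩
      have hcm := hS hc
      have hdm := hS hd
      simp only [Set.mem_Iic] at hcm hdm
      exact ⟨d, c, ⟨hd, hc, by omega, by omega⟩, by omega, by omega⟩
    · rintro ⟨a, b, ⟨ha, hb, hab, hsum⟩, hx, hy⟩
      have ham := hS ha
      have hbm := hS hb
      simp only [Set.mem_Iic] at ham hbm
      exact ⟨⟨b, hb, hx⟩, ⟨a, ha, hy⟩, by omega, by omega⟩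
  rw [himg]
  apply Set.ncard_image_of_injOn
  rintro ⟨a, b⟩ ⟨ha, hb, -, -⟩ ⟨c, d⟩ ⟨hc, hd, -, -⟩ h
  have := hS ha; have := hS hb; have := hS hc; have := hS hd
  simp only [Set.mem_Iic] at *
  simp only [Prod.mk.injEq] at h ⊢
  omega

theorem reflection_preserves (m : ℕ) (hm : 0 < m)
    (s : ℕ) (r : Fin s → ℕ) (hmono : StrictMono r)
    (hrpos : ∀ i, 0 < r i) (hrle : ∀ i, r i ≤ m)
    (C D : Set ℕ) (hU : C ∪ D = Set.Iic m) (hI : C ∩ D = Set.range r)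
    (hR : ∀ n : ℕ, 0 < n → R C n = R D n) :
    ((m - ·) '' C) ∪ ((m - ·) '' D) = Set.Iic m ∧
    ((m - ·) '' C) ∩ ((m - ·) '' D) = (m - ·) '' Set.range r ∧
    ∀ n : ℕ, 0 < n → R ((m - ·) '' C) n = R ((m - ·) '' D) n := by
  have hC : C ⊆ Set.Iic m := hU ▸ Set.subset_union_left
  have hD : D ⊆ Set.Iic m := hU ▸ Set.subset_union_right
  refine ⟨?_, ?_, ?_⟩
  · ext x
    simp only [Set.mem_union, Set.mem_image, Set.mem_Iic]
    constructor
    · rintro (⟨c, -, rfl⟩ | ⟨d, -, rfl⟩) <;> omega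
    · intro hx
      have : m - x ∈ C ∪ D := by rw [hU]; simp
      rcases this with h | h
      · exact Or.inl ⟨m - x, h, by omega⟩
      · exact Or.inr ⟨m - x, h, by omega⟩
  · rw [← hI]
    ext x
    simp only [Set.mem_inter_iff, Set.mem_image]
    constructor
    · rintro ⟨⟨c, hc, rfl⟩, ⟨d, hd, hdx⟩⟩
      have hcm := hC hc
      have hdm := hD hd
      simp only [Set.mem_Iic] at hcm hdm
      have : c = d := by omega
      exact ⟨c, ⟨hc, this ▸ hd⟩, rfl⟩
    · rintro ⟨c, ⟨hc, hd⟩, rfl⟩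
      exact ⟨⟨c, hc, rfl⟩, ⟨c, hd, rfl⟩⟩
  · intro n hn
    rw [R_reflect m C hC, R_reflect m D hD]
    rcases lt_or_ge n (2 * m) with h | h
    · exact hR _ (by omega)
    · have : 2 * m - n = 0 := by omega
      rw [this, R_zero, R_zero]
end

section
/- Let m ≥ 2 and r ≥ 1 be integers with r ≤ m/2, and let C and D be sets of nonnegative integers such that C ∪ D = [0, m], C ∩ D = {r}, 0 ∈ C, and R_C(n) = R_D(n) for every positive integer n. Then there exists a positive integer l such that r = 2^{2l} − 1. -/
open scoped Classical

private def s2 (n : ℕ) : ℕ := (Nat.digits 2 n).sum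

private def tm (n : ℕ) : ℤ := if Even (s2 n) then 1 else -1

private lemma s2_zero : s2 0 = 0 := by simp [s2]

private lemma s2_rec (n : ℕ) (hn : 0 < n) : s2 n = n % 2 + s2 (n / 2) := by
  unfold s2
  rw [Nat.digits_def' (by norm_num) hn]
  simp

private lemma s2_two_mul (n : ℕ) : s2 (2 * n) = s2 n := by
  rcases Nat.eq_zero_or_pos n with h | h
  · simp [h]
  · rw [s2_rec (2 * n) (by omega)]
    simp [Nat.mul_div_cancel_left, Nat.mul_mod_right]

private lemma s2_two_mul_add_one (n : ℕ) : s2 (2 * n + 1) = s2 n + 1 := by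
  rw [s2_rec (2 * n + 1) (by omega)]
  have h1 : (2 * n + 1) % 2 = 1 := by omega
  have h2 : (2 * n + 1) / 2 = n := by omega
  rw [h1, h2]; ring

private lemma tm_zero : tm 0 = 1 := by simp [tm, s2_zero]

private lemma tm_two_mul (n : ℕ) : tm (2 * n) = tm n := by
  simp [tm, s2_two_mul]

private lemma tm_two_mul_add_one (n : ℕ) : tm (2 * n + 1) = -tm n := by
  simp only [tm, s2_two_mul_add_one, Nat.even_add_one]
  by_cases h : Even (s2 n) <;> simp [h]

private lemma tm_pm (n : ℕ) : tm n = 1 ∨ tm n = -1 := by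
  unfold tm; split <;> simp

private lemma tm_even (n : ℕ) (h : 2 ∣ n) : tm n = tm (n / 2) := by
  obtain ⟨k, rfl⟩ := h
  rw [Nat.mul_div_cancel_left _ (by norm_num), tm_two_mul]

private lemma tm_odd (n : ℕ) (h : ¬ 2 ∣ n) : tm n = -tm (n / 2) := by
  have h2 : n = 2 * (n / 2) + 1 := by omega
  rw [h2, tm_two_mul_add_one]
  congr 1
  congr 1
  omega

private lemma s2_pow_sub_one (a : ℕ) : s2 (2 ^ a - 1) = a := by
  induction a with
  | zero => simp [s2_zero]
  | succ a ih =>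
    have h : 2 ^ (a + 1) - 1 = 2 * (2 ^ a - 1) + 1 := by
      have : 1 ≤ 2 ^ a := Nat.one_le_two_pow
      rw [pow_succ]; omega
    rw [h, s2_two_mul_add_one, ih]

private lemma lemA : ∀ p, 0 < p → ¬ (∀ j, j < p → tm (p + j) = tm j) := by
  intro p
  induction p using Nat.strong_induction_on with
  | _ p ih =>
    intro hp h
    rcases Nat.even_or_odd p with ⟨q, hq⟩ | ⟨q, hq⟩
    · -- p = 2q
      have hq1 : 0 < q := by omega
      apply ih q (by omega) hq1
      intro j hj
      have := h (2 * j) (by omega)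
      have e1 : p + 2 * j = 2 * (q + j) := by omega
      rw [e1, tm_two_mul, tm_two_mul] at this
      exact this
    · -- p = 2q + 1
      rcases Nat.eq_zero_or_pos q with h0 | h0
      · have := h 0 (by omega)
        have e : p + 0 = 2 * 0 + 1 := by omega
        rw [e, tm_two_mul_add_one, tm_zero] at this
        norm_num at this
      · -- q ≥ 1, p ≥ 3
        have h1 := h 1 (by omega)
        have h2 := h 2 (by omega)
        have e1 : p + 1 = 2 * (q + 1) := by omega
        have e2 : p + 2 = 2 * (q + 1) + 1 := by omega
        have et1 : tm 1 = -1 := by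
          rw [show (1:ℕ) = 2 * 0 + 1 by ring, tm_two_mul_add_one, tm_zero]
        have et2 : tm 2 = -1 := by
          rw [show (2:ℕ) = 2 * 1 by ring, tm_two_mul, et1]
        rw [e1, tm_two_mul, et1] at h1
        rw [e2, tm_two_mul_add_one, h1, et2] at h2
        norm_num at h2

private lemma lemB : ∀ p, 0 < p → (∀ i, i + 1 < p → tm (p + i) = -tm i) → ∃ a, p = 2 ^ a := by
  intro p
  induction p using Nat.strong_induction_on with
  | _ p ih =>
    intro hp h
    rcases Nat.even_or_odd p with ⟨q, hq⟩ | ⟨q, hq⟩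
    · have hq1 : 0 < q := by omega
      obtain ⟨a, ha⟩ := ih q (by omega) hq1 (by
        intro i hi
        have := h (2 * i) (by omega)
        have e1 : p + 2 * i = 2 * (q + i) := by omega
        rw [e1, tm_two_mul, tm_two_mul] at this
        exact this)
      exact ⟨a + 1, by rw [pow_succ]; omega⟩
    · rcases Nat.eq_zero_or_pos q with h0 | h0
      · exact ⟨0, by omega⟩
      · exfalso
        have et1 : tm 1 = -1 := by
          rw [show (1:ℕ) = 2 * 0 + 1 by ring, tm_two_mul_add_one, tm_zero]
        have et2 : tm 2 = -1 := by
          rw [show (2:ℕ) = 2 * 1 by ring, tm_two_mul, et1]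
        rcases Nat.lt_or_ge q 2 with hq2 | hq2
        · -- q = 1, p = 3
          have := h 0 (by omega)
          have e : p + 0 = 2 * 1 + 1 := by omega
          rw [e, tm_two_mul_add_one, et1, tm_zero] at this
          norm_num at this
        · -- q ≥ 2, p ≥ 5
          have h1 := h 1 (by omega)
          have h2 := h 2 (by omega)
          have e1 : p + 1 = 2 * (q + 1) := by omega
          have e2 : p + 2 = 2 * (q + 1) + 1 := by omega
          rw [e1, tm_two_mul, et1] at h1
          rw [e2, tm_two_mul_add_one, h1, et2] at h2
          norm_num at h2


private lemma tm_split (n : ℕ) (hn : 1 ≤ n) :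
    (if 2 ∣ n then tm (n / 2) else 0) - (if 2 ∣ (n - 1) then tm ((n - 1) / 2) else 0)
      = tm n := by
  by_cases h2 : 2 ∣ n
  · have h' : ¬ 2 ∣ (n - 1) := by omega
    rw [if_pos h2, if_neg h', tm_even n h2]; ring
  · have h' : 2 ∣ (n - 1) := by omega
    have e : (n - 1) / 2 = n / 2 := by omega
    rw [if_neg h2, if_pos h', e, tm_odd n h2]; ring



open Finset in
private lemma R_card (S : Set ℕ) (n : ℕ) :
    R S n = ((Finset.range (n + 1)).filter
      (fun i => i ∈ S ∧ (n - i) ∈ S ∧ 2 * i < n)).card := by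
  classical
  unfold R
  have hset : {p : ℕ × ℕ | p.1 ∈ S ∧ p.2 ∈ S ∧ p.1 < p.2 ∧ p.1 + p.2 = n}
      = ↑(((Finset.range (n + 1)).filter
        (fun i => i ∈ S ∧ (n - i) ∈ S ∧ 2 * i < n)).image (fun i => (i, n - i))) := by
    ext p
    simp only [Set.mem_setOf_eq, coe_image, Set.mem_image, mem_coe, mem_filter, mem_range]
    constructor
    · rintro ⟨h1, h2, h3, h4⟩
      refine ⟨p.1, ⟨by omega, h1, ?_, by omega⟩, ?_⟩
      · have : n - p.1 = p.2 := by omega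
        rw [this]; exact h2
      · have : n - p.1 = p.2 := by omega
        rw [this]
    · rintro ⟨i, ⟨hi, h1, h2, h3⟩, rfl⟩
      exact ⟨h1, h2, by omega, by omega⟩
  rw [hset, Set.ncard_coe_finset, Finset.card_image_of_injOn]
  intro a _ b _ hab
  exact (Prod.mk.injEq _ _ _ _).mp hab |>.1

open Finset in
private lemma ordered_count (S : Set ℕ) (n : ℕ) :
    ∑ i ∈ Finset.range (n + 1), (if i ∈ S ∧ (n - i) ∈ S then (1 : ℤ) else 0)
      = 2 * R S n + (if 2 ∣ n ∧ n / 2 ∈ S then 1 else 0) := by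
  classical
  have split : ∀ i ∈ Finset.range (n + 1),
      (if i ∈ S ∧ (n - i) ∈ S then (1 : ℤ) else 0)
        = (if i ∈ S ∧ (n - i) ∈ S ∧ 2 * i < n then (1 : ℤ) else 0)
        + (if i ∈ S ∧ (n - i) ∈ S ∧ 2 * i = n then (1 : ℤ) else 0)
        + (if i ∈ S ∧ (n - i) ∈ S ∧ n < 2 * i then (1 : ℤ) else 0) := by
    intro i _
    by_cases h1 : i ∈ S <;> by_cases h2 : (n - i) ∈ S <;>
      simp [h1, h2] <;> split_ifs <;> omega
  rw [Finset.sum_congr rfl split]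
  rw [Finset.sum_add_distrib, Finset.sum_add_distrib]
  have e1 : ∑ i ∈ Finset.range (n + 1),
      (if i ∈ S ∧ (n - i) ∈ S ∧ 2 * i < n then (1 : ℤ) else 0) = R S n := by
    rw [R_card, Finset.sum_boole]
  have e3 : ∑ i ∈ Finset.range (n + 1),
      (if i ∈ S ∧ (n - i) ∈ S ∧ n < 2 * i then (1 : ℤ) else 0)
      = ∑ i ∈ Finset.range (n + 1),
      (if i ∈ S ∧ (n - i) ∈ S ∧ 2 * i < n then (1 : ℤ) else 0) := by
    rw [← Finset.sum_range_reflect]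
    apply Finset.sum_congr rfl
    intro i hi
    have hin : i ≤ n := by simpa using Nat.lt_succ_iff.mp (Finset.mem_range.mp hi)
    have h0 : n + 1 - 1 - i = n - i := by omega
    have h1 : n - (n - i) = i := by omega
    have h2 : (n < 2 * (n - i)) ↔ (2 * i < n) := by omega
    rw [h0, h1]
    by_cases ha : (n - i) ∈ S <;> by_cases hb : i ∈ S <;>
      simp [ha, hb, h2, and_comm]
  have e2 : ∑ i ∈ Finset.range (n + 1),
      (if i ∈ S ∧ (n - i) ∈ S ∧ 2 * i = n then (1 : ℤ) else 0)
      = (if 2 ∣ n ∧ n / 2 ∈ S then 1 else 0) := by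
    by_cases hdvd : 2 ∣ n
    · have key : ∀ i ∈ Finset.range (n + 1),
          (if i ∈ S ∧ (n - i) ∈ S ∧ 2 * i = n then (1 : ℤ) else 0)
          = (if i = n / 2 then (if n / 2 ∈ S then (1 : ℤ) else 0) else 0) := by
        intro i _
        by_cases he : 2 * i = n
        · have hi2 : i = n / 2 := by omega
          have hni : n - i = i := by omega
          subst hi2
          rw [hni]
          by_cases hs : n / 2 ∈ S <;> simp [hs, he]
        · have : i ≠ n / 2 := by omega
          simp [this, he]
      rw [Finset.sum_congr rfl key, Finset.sum_ite_eq' (Finset.range (n + 1)) (n / 2)]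
      have : n / 2 ∈ Finset.range (n + 1) := by
        rw [Finset.mem_range]; omega
      simp [this, hdvd]
    · have key : ∀ i ∈ Finset.range (n + 1),
          (if i ∈ S ∧ (n - i) ∈ S ∧ 2 * i = n then (1 : ℤ) else 0) = 0 := by
        intro i _
        have : ¬ (2 * i = n) := by omega
        simp [this]
      rw [Finset.sum_congr rfl key]
      simp [hdvd]
  rw [e1, e2, e3, e1]
  ring



private noncomputable def del (C D : Set ℕ) (i : ℕ) : ℤ :=
  (if i ∈ C then 1 else 0) - (if i ∈ D then 1 else 0)

private noncomputable def GG (C D : Set ℕ) (n : ℕ) : ℤ :=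
  ∑ i ∈ Finset.range (n + 1), del C D i

private lemma del_bd (C D : Set ℕ) (i : ℕ) : -1 ≤ del C D i ∧ del C D i ≤ 1 := by
  unfold del; split_ifs <;> norm_num

private lemma GG_zero (C D : Set ℕ) : GG C D 0 = del C D 0 := by simp [GG]

private lemma GG_rec (C D : Set ℕ) (n : ℕ) (hn : 1 ≤ n) :
    GG C D n = GG C D (n - 1) + del C D n := by
  unfold GG
  have e : n - 1 + 1 = n := by omega
  calc ∑ i ∈ Finset.range (n + 1), del C D i
      = ∑ i ∈ Finset.range ((n - 1) + 1 + 1), del C D i := by rw [e]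
    _ = ∑ i ∈ Finset.range ((n - 1) + 1), del C D i + del C D ((n - 1) + 1) :=
        Finset.sum_range_succ _ _
    _ = _ := by rw [e]

private lemma star_eq (m r : ℕ) (C D : Set ℕ)
    (hU : C ∪ D = Set.Iic m) (hI : C ∩ D = {r})
    (hR : ∀ n : ℕ, 0 < n → R C n = R D n) :
    ∀ n, 1 ≤ n → n ≤ m →
      GG C D n + (if r ≤ n then del C D (n - r) else 0)
        = (if 2 ∣ n then del C D (n / 2) else 0) := by
  have hrCD : r ∈ C ∩ D := by rw [hI]; exact rfl
  have hσ : ∀ j, ((if j ∈ C then (1:ℤ) else 0) + (if j ∈ D then 1 else 0))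
      = ((if j ≤ m then (1:ℤ) else 0) + (if j = r then 1 else 0)) := by
    intro j
    by_cases hC : j ∈ C <;> by_cases hD : j ∈ D
    · have hjr : j = r := by
        have h : j ∈ C ∩ D := ⟨hC, hD⟩
        rw [hI] at h; exact h
      have hjm : j ≤ m := by
        have h : j ∈ C ∪ D := Or.inl hC
        rw [hU] at h; exact h
      subst hjr
      simp [hC, hD, hjm]
    · have hjm : j ≤ m := by
        have h : j ∈ C ∪ D := Or.inl hC
        rw [hU] at h; exact h
      have hjr : j ≠ r := fun h => hD (h ▸ hrCD.2)
      simp [hC, hD, hjr, hjm]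
    · have hjm : j ≤ m := by
        have h : j ∈ C ∪ D := Or.inr hD
        rw [hU] at h; exact h
      have hjr : j ≠ r := fun h => hC (h ▸ hrCD.1)
      simp [hC, hD, hjr, hjm]
    · have hjm : ¬ j ≤ m := by
        intro h
        have h2 : j ∈ C ∪ D := by rw [hU]; exact h
        rcases h2 with h2 | h2
        · exact hC h2
        · exact hD h2
      have hjr : j ≠ r := fun h => hC (h ▸ hrCD.1)
      simp [hC, hD, hjr, hjm]
  have main2 : ∀ n, 1 ≤ n →
      ∑ i ∈ Finset.range (n + 1),
        del C D i * ((if (n - i) ∈ C then (1:ℤ) else 0) + (if (n - i) ∈ D then 1 else 0))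
      = (if 2 ∣ n then del C D (n / 2) else 0) := by
    intro n hn
    have hRn : (R C n : ℤ) = R D n := by exact_mod_cast hR n hn
    have hA : ∑ i ∈ Finset.range (n + 1),
        ((if i ∈ C ∧ (n - i) ∈ C then (1:ℤ) else 0) - (if i ∈ D ∧ (n - i) ∈ D then 1 else 0))
        = (if 2 ∣ n ∧ n / 2 ∈ C then 1 else 0) - (if 2 ∣ n ∧ n / 2 ∈ D then 1 else 0) := by
      rw [Finset.sum_sub_distrib, ordered_count, ordered_count, hRn]; ring
    have h2A : 2 * ∑ i ∈ Finset.range (n + 1),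
        ((if i ∈ C ∧ (n - i) ∈ C then (1:ℤ) else 0) - (if i ∈ D ∧ (n - i) ∈ D then 1 else 0))
        = ∑ i ∈ Finset.range (n + 1),
          (del C D i * ((if (n - i) ∈ C then (1:ℤ) else 0) + (if (n - i) ∈ D then 1 else 0))
           + ((if i ∈ C then (1:ℤ) else 0) + (if i ∈ D then 1 else 0)) * del C D (n - i)) := by
      rw [Finset.mul_sum]
      apply Finset.sum_congr rfl
      intro i _
      unfold del
      by_cases h1 : i ∈ C <;> by_cases h2 : (n - i) ∈ C <;>
        by_cases h3 : i ∈ D <;> by_cases h4 : (n - i) ∈ D <;>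
        simp [h1, h2, h3, h4] <;> ring
    have hrefl : ∑ i ∈ Finset.range (n + 1),
        ((if i ∈ C then (1:ℤ) else 0) + (if i ∈ D then 1 else 0)) * del C D (n - i)
        = ∑ i ∈ Finset.range (n + 1),
          del C D i * ((if (n - i) ∈ C then (1:ℤ) else 0) + (if (n - i) ∈ D then 1 else 0)) := by
      rw [← Finset.sum_range_reflect]
      apply Finset.sum_congr rfl
      intro i hi
      have hin : i ≤ n := by
        have := Finset.mem_range.mp hi; omega
      have e0 : n + 1 - 1 - i = n - i := by omega
      have e1 : n - (n - i) = i := by omega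
      rw [e0, e1]
      ring
    have hB : (if 2 ∣ n ∧ n / 2 ∈ C then (1:ℤ) else 0) - (if 2 ∣ n ∧ n / 2 ∈ D then 1 else 0)
        = (if 2 ∣ n then del C D (n / 2) else 0) := by
      by_cases h2 : 2 ∣ n <;> simp [h2, del]
    rw [Finset.sum_add_distrib, hrefl] at h2A
    linarith [hA, h2A, hB]
  intro n hn hnm
  have h := main2 n hn
  have hconv : ∑ i ∈ Finset.range (n + 1),
      del C D i * ((if (n - i) ∈ C then (1:ℤ) else 0) + (if (n - i) ∈ D then 1 else 0))
      = ∑ i ∈ Finset.range (n + 1),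
        (del C D i * (if (n - i) ≤ m then (1:ℤ) else 0)
          + del C D i * (if (n - i) = r then 1 else 0)) := by
    apply Finset.sum_congr rfl
    intro i _
    rw [hσ (n - i)]
    ring
  rw [hconv, Finset.sum_add_distrib] at h
  have hG : ∑ i ∈ Finset.range (n + 1), del C D i * (if (n - i) ≤ m then (1:ℤ) else 0)
      = GG C D n := by
    unfold GG
    apply Finset.sum_congr rfl
    intro i _
    have : n - i ≤ m := le_trans (Nat.sub_le n i) hnm
    rw [if_pos this, mul_one]
  have hr2 : ∑ i ∈ Finset.range (n + 1), del C D i * (if (n - i) = r then (1:ℤ) else 0)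
      = (if r ≤ n then del C D (n - r) else 0) := by
    by_cases hrn : r ≤ n
    · have key : ∀ i ∈ Finset.range (n + 1),
          del C D i * (if (n - i) = r then (1:ℤ) else 0)
          = (if i = n - r then del C D i else 0) := by
        intro i hi
        have hin : i ≤ n := by
          have := Finset.mem_range.mp hi; omega
        by_cases he : n - i = r
        · have hh : i = n - r := by omega
          subst hh
          simp [he]
        · have : i ≠ n - r := by omega
          simp [he, this]
      rw [Finset.sum_congr rfl key, Finset.sum_ite_eq' (Finset.range (n + 1)) (n - r)]
      have : n - r ∈ Finset.range (n + 1) := by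
        rw [Finset.mem_range]; omega
      simp [this, hrn]
    · have key : ∀ i ∈ Finset.range (n + 1),
          del C D i * (if (n - i) = r then (1:ℤ) else 0) = 0 := by
        intro i hi
        have hin : i ≤ n := by
          have := Finset.mem_range.mp hi; omega
        have : ¬ (n - i = r) := by omega
        simp [this]
      rw [Finset.sum_congr rfl key]
      simp [hrn]
  rw [hG, hr2] at h
  exact h


theorem r_eq_pow_sub_one (m r : ℕ) (hm : 2 ≤ m) (hr : 1 ≤ r)
    (hrm : 2 * r ≤ m) (C D : Set ℕ)
    (hU : C ∪ D = Set.Iic m) (hI : C ∩ D = {r}) (h0 : (0 : ℕ) ∈ C)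
    (hR : ∀ n : ℕ, 0 < n → R C n = R D n) :
    ∃ l : ℕ, 0 < l ∧ r = 2 ^ (2 * l) - 1 := by
  classical
  have hrCD : r ∈ C ∩ D := by rw [hI]; exact rfl
  have h0D : (0 : ℕ) ∉ D := by
    intro h
    have h2 : (0 : ℕ) ∈ C ∩ D := ⟨h0, h⟩
    rw [hI] at h2
    have h3 : (0 : ℕ) = r := h2
    omega
  have hδ0 : del C D 0 = 1 := by simp [del, h0, h0D]
  have hδr : del C D r = 0 := by simp [del, hrCD.1, hrCD.2]
  have star := star_eq m r C D hU hI hR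
  -- Claim 1 : below r, del follows the Thue–Morse sequence
  have claim1 : ∀ n, n < r →
      del C D n = tm n ∧ GG C D n = (if 2 ∣ n then tm (n / 2) else 0) := by
    intro n
    induction n using Nat.strong_induction_on with
    | _ n ih =>
      intro hnr
      rcases Nat.eq_zero_or_pos n with rfl | hn1
      · refine ⟨by rw [hδ0, tm_zero], ?_⟩
        rw [GG_zero, hδ0]
        norm_num [tm_zero]
      · have hst := star n hn1 (by omega)
        rw [if_neg (by omega : ¬ r ≤ n)] at hst
        have hGn : GG C D n = (if 2 ∣ n then tm (n / 2) else 0) := by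
          by_cases h2 : 2 ∣ n
          · rw [if_pos h2] at hst ⊢
            rw [(ih (n / 2) (by omega) (by omega)).1] at hst
            linarith
          · rw [if_neg h2] at hst ⊢
            linarith
        refine ⟨?_, hGn⟩
        have hG' := (ih (n - 1) (by omega) (by omega)).2
        have hrec := GG_rec C D n hn1
        by_cases h2 : 2 ∣ n
        · have hodd : ¬ 2 ∣ (n - 1) := by omega
          rw [if_neg hodd] at hG'
          rw [if_pos h2] at hGn
          rw [tm_even n h2]
          linarith
        · have hev : 2 ∣ (n - 1) := by omega
          rw [if_pos hev] at hG'
          rw [if_neg h2] at hGn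
          rw [tm_odd n h2]
          have e : (n - 1) / 2 = n / 2 := by omega
          rw [e] at hG'
          linarith
  -- Claim 2 : tm r = 1
  have claim2 : tm r = 1 := by
    have hst := star r hr (by omega)
    rw [if_pos (le_refl r), Nat.sub_self, hδ0] at hst
    have hrec := GG_rec C D r hr
    rw [hδr, add_zero] at hrec
    by_cases h2 : 2 ∣ r
    · have hodd : ¬ 2 ∣ (r - 1) := by omega
      have hG' := (claim1 (r - 1) (by omega)).2
      rw [if_neg hodd] at hG'
      rw [if_pos h2] at hst
      have hd := (claim1 (r / 2) (by omega)).1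
      rw [hd] at hst
      rw [tm_even r h2]
      linarith
    · have hev : 2 ∣ (r - 1) := by omega
      have hG' := (claim1 (r - 1) (by omega)).2
      rw [if_pos hev] at hG'
      rw [if_neg h2] at hst
      rw [tm_odd r h2]
      have e : (r - 1) / 2 = r / 2 := by omega
      rw [e] at hG'
      linarith
  -- Claim 3 : for odd k < r, tm (r + k) = tm k
  have claim3 : ∀ k, k < r → ¬ 2 ∣ k → tm (r + k) = tm k := by
    intro k hkr hk2
    have hk1 : 1 ≤ k := by omega
    have hA1 : GG C D (r + k)
        = (if 2 ∣ (r + k) then tm ((r + k) / 2) else 0) - tm k := by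
      have hst := star (r + k) (by omega) (by omega)
      rw [if_pos (by omega : r ≤ r + k)] at hst
      have e : r + k - r = k := by omega
      rw [e, (claim1 k hkr).1] at hst
      by_cases h2 : 2 ∣ (r + k)
      · rw [if_pos h2] at hst ⊢
        rw [(claim1 ((r + k) / 2) (by omega)).1] at hst
        linarith
      · rw [if_neg h2] at hst ⊢
        linarith
    have hA0 : GG C D (r + k - 1)
        = (if 2 ∣ (r + k - 1) then tm ((r + k - 1) / 2) else 0) - tm (k - 1) := by
      have hst := star (r + k - 1) (by omega) (by omega)
      rw [if_pos (by omega : r ≤ r + k - 1)] at hst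
      have e : r + k - 1 - r = k - 1 := by omega
      rw [e, (claim1 (k - 1) (by omega)).1] at hst
      by_cases h2 : 2 ∣ (r + k - 1)
      · rw [if_pos h2] at hst ⊢
        rw [(claim1 ((r + k - 1) / 2) (by omega)).1] at hst
        linarith
      · rw [if_neg h2] at hst ⊢
        linarith
    have hsplit := tm_split (r + k) (by omega)
    have hrec := GG_rec C D (r + k) (by omega)
    have htk1 : tm (k - 1) = -tm k := by
      have e1 : k - 1 = 2 * (k / 2) := by omega
      have e2 := tm_odd k hk2
      rw [e1, tm_two_mul]
      linarith
    have hbd := del_bd C D (r + k)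
    have hδval : del C D (r + k) = tm (r + k) - 2 * tm k := by
      linarith [hA1, hA0, hsplit, hrec, htk1]
    rcases tm_pm (r + k) with h1 | h1 <;> rcases tm_pm k with h2 | h2
    · rw [h1, h2]
    · exfalso; rw [h1, h2] at hδval; linarith [hbd.1, hbd.2]
    · exfalso; rw [h1, h2] at hδval; linarith [hbd.1, hbd.2]
    · rw [h1, h2]
  -- Final assembly
  rcases Nat.even_or_odd r with hre | hro
  · exfalso
    obtain ⟨q, hq⟩ := hre
    have hq1 : 0 < q := by omega
    apply lemA q hq1
    intro j hj
    have hk : ¬ 2 ∣ (2 * j + 1) := by omega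
    have h3 := claim3 (2 * j + 1) (by omega) hk
    have e1 : r + (2 * j + 1) = 2 * (q + j) + 1 := by omega
    rw [e1, tm_two_mul_add_one, tm_two_mul_add_one] at h3
    linarith
  · obtain ⟨q, hq⟩ := hro
    obtain ⟨a, ha⟩ := lemB (q + 1) (by omega) (by
      intro i hi
      have hk : ¬ 2 ∣ (2 * i + 1) := by omega
      have h3 := claim3 (2 * i + 1) (by omega) hk
      have e1 : r + (2 * i + 1) = 2 * ((q + 1) + i) := by omega
      rw [e1, tm_two_mul, tm_two_mul_add_one] at h3
      exact h3)
    have hq2 : tm q = -1 := by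
      have e2 := tm_odd r (by omega)
      have e : r / 2 = q := by omega
      rw [e] at e2
      linarith [claim2]
    have hqa : q = 2 ^ a - 1 := by omega
    have hs : s2 q = a := by rw [hqa]; exact s2_pow_sub_one a
    have hodd_a : ¬ Even a := by
      intro hEa
      rw [← hs] at hEa
      unfold tm at hq2
      rw [if_pos hEa] at hq2
      norm_num at hq2
    have hOa : Odd a := (Nat.even_or_odd a).resolve_left hodd_a
    obtain ⟨l, hl⟩ := hOa
    refine ⟨l + 1, by omega, ?_⟩
    have hpow : 2 ^ (2 * (l + 1)) = 2 * 2 ^ a := by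
      rw [show 2 * (l + 1) = a + 1 by omega, pow_succ]
      ring
    have h2a : 1 ≤ 2 ^ a := Nat.one_le_two_pow
    omega
end
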